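/- If preferences are single-peaked and k ≥ ⌈m/2⌉, then any Bloc-voting winning set (with each winner having strictly more approvals than each non-winner) is Gehrlein-stable. -/

import Mathlib

open Finset

/-- Each voter's preference is a strict total (linear) order on the candidates. -/
def StrictPrefs {m N : ℕ} (P : Fin N → Fin m → Fin m → Prop) : Prop :=
  ∀ v : Fin N, IsStrictTotalOrder (Fin m) (P v)

/-- Single-peakedness w.r.t. the left-right order on `Fin m`: for `i < j < k`,
no voter ranks both `C_i` and `C_k` above `C_j`. -/
def SinglePeaked {m N : ℕ} (P : Fin N → Fin m → Fin m → Prop) : Prop :=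
  ∀ (v : Fin N) (i j k : Fin m), i < j → j < k → ¬ (P v i j ∧ P v k j)

/-- Number of voters preferring `a` to `b`. -/
def prefCount {m N : ℕ} (P : Fin N → Fin m → Fin m → Prop)
    [∀ v a b, Decidable (P v a b)] (a b : Fin m) : ℕ :=
  (univ.filter fun v => P v a b).card

/-- `a` majority-defeats `b`: strictly more than `N/2` voters prefer `a` to `b`. -/
def Defeats {m N : ℕ} (P : Fin N → Fin m → Fin m → Prop)
    [∀ v a b, Decidable (P v a b)] (a b : Fin m) : Prop :=
  2 * prefCount P a b > N

instance {m N : ℕ} (P : Fin N → Fin m → Fin m → Prop)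
    [∀ v a b, Decidable (P v a b)] (a b : Fin m) : Decidable (Defeats P a b) :=
  inferInstanceAs (Decidable (2 * prefCount P a b > N))

/-- Voter `v` approves candidate `a` under Bloc voting with `k` winners:
`a` is among `v`'s top `k` candidates. -/
def Approves {m N : ℕ} (P : Fin N → Fin m → Fin m → Prop)
    [∀ v a b, Decidable (P v a b)] (k : ℕ) (v : Fin N) (a : Fin m) : Prop :=
  (univ.filter fun b => P v b a).card < k

instance {m N : ℕ} (P : Fin N → Fin m → Fin m → Prop)
    [∀ v a b, Decidable (P v a b)] (k : ℕ) (v : Fin N) (a : Fin m) :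
    Decidable (Approves P k v a) :=
  inferInstanceAs (Decidable ((univ.filter fun b => P v b a).card < k))

/-- Bloc score of candidate `a`: the number of voters who approve `a`. -/
def blocScore {m N : ℕ} (P : Fin N → Fin m → Fin m → Prop)
    [∀ v a b, Decidable (P v a b)] (k : ℕ) (a : Fin m) : ℕ :=
  (univ.filter fun v => Approves P k v a).card

/-- `W` is a winning set under Bloc voting with `k` winners (strict vote totals):
`W` has `k` members and each member has strictly more approvals than each non-member. -/
def IsWinningSet {m N : ℕ} (P : Fin N → Fin m → Fin m → Prop)
    [∀ v a b, Decidable (P v a b)] (k : ℕ) (W : Finset (Fin m)) : Prop :=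
  W.card = k ∧ ∀ w ∈ W, ∀ c ∉ W, blocScore P k w > blocScore P k c

/-! Single-peakedness makes every voter's top-`k` set order-connected, so each voter approves
a block `[s, s + k)` of consecutive candidates; as `m ≤ 2k`, every voter then approves exactly
one of `a` and `a + k`. A winning set is a block `[t, t + k)` too: a non-winner `y` between two
winners would need one voter whose block lies left of `y` and one whose block lies right of it,
forcing `m > 2k`. If `c` lies left of `W`, the winner `e = t + k - 1` beats its partner
`t - 1 ∉ W`, so a strict majority approves `e`; a voter approving `e` cannot prefer `c` to a
winner `w`, since by single-peakedness it would then also approve `c`, which is at least `k`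
places away from `e`. Symmetrically with the pair `(t, t + k)` if `c` lies right of `W`. -/

theorem Finset.exists_mem_iff_of_ordConnected {m : ℕ} (S : Finset (Fin m))
    (hS : (S : Set (Fin m)).OrdConnected) :
    ∃ s, s + #S ≤ m ∧ ∀ a : Fin m, a ∈ S ↔ s ≤ a ∧ (a : ℕ) < s + #S := by
  rcases S.eq_empty_or_nonempty with rfl | hne
  · exact ⟨0, by simp⟩
  set t := S.min' hne
  set e := S.max' hne
  have hS_eq : S = Icc t e := by
    refine subset_antisymm (fun x hx => mem_Icc.2 ⟨S.min'_le x hx, S.le_max' x hx⟩) ?_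
    intro x hx
    exact_mod_cast hS.out (S.min'_mem hne) (S.max'_mem hne) (mem_Icc.1 hx)
  have hte : t ≤ e := S.min'_le e (S.max'_mem hne)
  have hcard : #S = e + 1 - t := by rw [hS_eq, Fin.card_Icc]
  refine ⟨t, by omega, fun a => ?_⟩
  rw [hcard, hS_eq, mem_Icc, Fin.le_def, Fin.le_def]
  omega

theorem Finset.card_filter_add_card_filter_of_iff_not {α : Type*} (s : Finset α)
    {p q : α → Prop} [DecidablePred p] [DecidablePred q] (h : ∀ a, q a ↔ ¬ p a) :
    #(s.filter p) + #(s.filter q) = #s := by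
  rw [filter_congr fun a _ => h a]
  convert card_filter_add_card_filter_not p

section Bloc

variable {m N : ℕ} {P : Fin N → Fin m → Fin m → Prop}

theorem prefers_of_not_prefers (hP : StrictPrefs P) {v : Fin N} {a b : Fin m} (hab : a ≠ b)
    (h : ¬ P v a b) : P v b a := by
  have := hP v
  exact (trichotomous_of (P v) a b).resolve_left h |>.resolve_left hab

theorem prefers_of_between (hP : StrictPrefs P) (hSP : SinglePeaked P) {v : Fin N}
    {c w e : Fin m} (hw : c < w ∧ w ≤ e ∨ e ≤ w ∧ w < c) (hcw : P v c w) : P v c e := by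
  have := hP v
  rcases eq_or_ne w e with rfl | hwe
  · exact hcw
  refine _root_.trans hcw (prefers_of_not_prefers hP hwe.symm fun hew => ?_)
  rcases hw with ⟨hcw', hwe'⟩ | ⟨hew', hwc'⟩
  · exact hSP v c w e hcw' (lt_of_le_of_ne hwe' hwe) ⟨hcw, hew⟩
  · exact hSP v e w c (lt_of_le_of_ne hew' hwe.symm) hwc' ⟨hew, hcw⟩

variable [∀ v a b, Decidable (P v a b)]

variable (P) in
def prefRank (v : Fin N) (a : Fin m) : ℕ := #{b | P v b a}

theorem approves_iff_prefRank_lt {k : ℕ} {v : Fin N} {a : Fin m} :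
    Approves P k v a ↔ prefRank P v a < k := Iff.rfl

theorem prefRank_lt_prefRank (hP : StrictPrefs P) {v : Fin N} {a b : Fin m} (h : P v a b) :
    prefRank P v a < prefRank P v b := by
  have := hP v
  refine card_lt_card ⟨fun x hx => ?_, fun hsub => ?_⟩
  · simp only [mem_filter, mem_univ, true_and] at hx ⊢
    exact _root_.trans hx h
  · have := hsub (mem_filter.2 ⟨mem_univ a, h⟩)
    exact irrefl a (mem_filter.1 this).2

theorem prefRank_injective (hP : StrictPrefs P) (v : Fin N) :
    Function.Injective (prefRank P v) := by
  have := hP v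
  intro a b hab
  rcases trichotomous_of (P v) a b with h | h | h
  · exact absurd hab (prefRank_lt_prefRank hP h).ne
  · exact h
  · exact absurd hab (prefRank_lt_prefRank hP h).ne'

theorem prefRank_lt (hP : StrictPrefs P) (v : Fin N) (a : Fin m) : prefRank P v a < m := by
  have := hP v
  have ha : a ∉ ({b | P v b a} : Finset (Fin m)) := by simp [irrefl]
  have hsub : ({b | P v b a} : Finset (Fin m)) ⊂ univ :=
    ssubset_univ_iff.2 fun h => ha (h.symm ▸ mem_univ a)
  simpa [prefRank] using card_lt_card hsub

theorem card_approves (hP : StrictPrefs P) (v : Fin N) {k : ℕ} (hkm : k ≤ m) :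
    #{a | Approves P k v a} = k := by
  have himage : univ.image (prefRank P v) = range m := by
    refine eq_of_subset_of_card_le (fun j hj => ?_) ?_
    · obtain ⟨a, -, rfl⟩ := mem_image.1 hj
      exact mem_range.2 (prefRank_lt hP v a)
    · rw [card_range, card_image_of_injective _ (prefRank_injective hP v), card_univ,
        Fintype.card_fin]
  have : ({a | Approves P k v a} : Finset (Fin m)).image (prefRank P v) = range k := by
    ext j
    simp only [mem_image, mem_filter, mem_univ, true_and, mem_range, approves_iff_prefRank_lt]
    refine ⟨fun ⟨a, ha, haj⟩ => haj ▸ ha, fun hj => ?_⟩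
    obtain ⟨a, -, ha⟩ := mem_image.1 (himage ▸ mem_range.2 (hj.trans_le hkm))
    exact ⟨a, ha ▸ hj, ha⟩
  rw [← card_image_of_injective _ (prefRank_injective hP v), this, card_range]

theorem approves_of_prefers (hP : StrictPrefs P) {k : ℕ} {v : Fin N} {a b : Fin m}
    (hab : P v a b) (hb : Approves P k v b) : Approves P k v a :=
  (prefRank_lt_prefRank hP hab).trans hb

theorem ordConnected_approves (hP : StrictPrefs P) (hSP : SinglePeaked P) (k : ℕ) (v : Fin N) :
    (({a | Approves P k v a} : Finset (Fin m)) : Set (Fin m)).OrdConnected := by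
  refine Set.ordConnected_of_Ioo fun x hx z hz _ y hy => ?_
  simp only [coe_filter, mem_univ, true_and, Set.mem_Ioo] at hx hz hy ⊢
  rcases not_and_or.1 (hSP v x y z hy.1 hy.2) with h | h
  · exact approves_of_prefers hP (prefers_of_not_prefers hP hy.1.ne h) hx
  · exact approves_of_prefers hP (prefers_of_not_prefers hP hy.2.ne' h) hz

theorem exists_approves_iff (hP : StrictPrefs P) (hSP : SinglePeaked P) {k : ℕ}
    (hkm : k ≤ m) (v : Fin N) :
    ∃ s, s + k ≤ m ∧ ∀ a : Fin m, Approves P k v a ↔ s ≤ a ∧ (a : ℕ) < s + k := by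
  obtain ⟨s, hs, hmem⟩ := exists_mem_iff_of_ordConnected _ (ordConnected_approves hP hSP k v)
  rw [card_approves hP v hkm] at hs hmem
  exact ⟨s, hs, fun a => by simpa using hmem a⟩

theorem lt_add_of_approves (hP : StrictPrefs P) (hSP : SinglePeaked P) {k : ℕ} (hkm : k ≤ m)
    {v : Fin N} {a b : Fin m} (ha : Approves P k v a) (hb : Approves P k v b) :
    (b : ℕ) < a + k := by
  obtain ⟨s, -, hs⟩ := exists_approves_iff hP hSP hkm v
  have := (hs a).1 ha
  have := (hs b).1 hb
  omega

theorem approves_iff_not_approves (hP : StrictPrefs P) (hSP : SinglePeaked P) {k : ℕ}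
    (hkm : k ≤ m) (hmk : m ≤ 2 * k) {v : Fin N} {a b : Fin m} (hab : (b : ℕ) = a + k) :
    Approves P k v a ↔ ¬ Approves P k v b := by
  obtain ⟨s, hsk, hs⟩ := exists_approves_iff hP hSP hkm v
  rw [hs, hs]
  omega

theorem IsWinningSet.ordConnected (hP : StrictPrefs P) (hSP : SinglePeaked P) {k : ℕ}
    {W : Finset (Fin m)} (hW : IsWinningSet P k W) (hmk : m ≤ 2 * k) :
    (W : Set (Fin m)).OrdConnected := by
  have hkm : k ≤ m := by simpa [hW.1] using card_le_univ W
  refine Set.ordConnected_of_Ioo fun x hx z hz _ y hy => by_contra fun hyW => ?_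
  obtain ⟨u, hux, huy⟩ := exists_mem_notMem_of_card_lt_card (hW.2 x hx y hyW)
  obtain ⟨u', hu'z, hu'y⟩ := exists_mem_notMem_of_card_lt_card (hW.2 z hz y hyW)
  simp only [mem_filter, mem_univ, true_and] at hux huy hu'z hu'y
  obtain ⟨s, -, hs⟩ := exists_approves_iff hP hSP hkm u
  obtain ⟨s', hs'm, hs'⟩ := exists_approves_iff hP hSP hkm u'
  rw [hs] at hux huy
  rw [hs'] at hu'z hu'y
  have := Fin.lt_def.1 hy.1
  have := Fin.lt_def.1 hy.2
  omega

theorem prefCount_add_prefCount (hP : StrictPrefs P) {a b : Fin m} (hab : a ≠ b) :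
    prefCount P a b + prefCount P b a = N := by
  have hba (v : Fin N) : P v b a ↔ ¬ P v a b := by
    have := hP v
    exact ⟨fun hba hab' => irrefl a (_root_.trans hab' hba), prefers_of_not_prefers hP hab⟩
  simpa [prefCount] using card_filter_add_card_filter_of_iff_not univ hba

theorem defeats_of_approves_iff_not (hP : StrictPrefs P) {k : ℕ} {w c x d : Fin m}
    (hwc : w ≠ c) (hdx : ∀ v, Approves P k v d ↔ ¬ Approves P k v x)
    (hscore : blocScore P k d < blocScore P k x)
    (hcw : ∀ v, P v c w → ¬ Approves P k v x) : Defeats P w c := by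
  have hdx_sum : blocScore P k x + blocScore P k d = N := by
    simpa [blocScore] using card_filter_add_card_filter_of_iff_not univ hdx
  have hx_sum : blocScore P k x + #{v | ¬ Approves P k v x} = N := by
    simpa [blocScore] using card_filter_add_card_filter_not (s := univ) fun v => Approves P k v x
  have hcw_le : prefCount P c w ≤ #{v | ¬ Approves P k v x} :=
    card_le_card fun v hv => by simpa using hcw v (by simpa using hv)
  have := prefCount_add_prefCount hP hwc
  unfold Defeats
  omega

theorem not_approves_of_prefers_of_far (hP : StrictPrefs P) (hSP : SinglePeaked P) {k : ℕ}
    (hkm : k ≤ m) {v : Fin N} {c w e : Fin m} (hw : c < w ∧ w ≤ e ∨ e ≤ w ∧ w < c)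
    (hce : c + k ≤ (e : ℕ) ∨ e + k ≤ (c : ℕ)) (hcw : P v c w) : ¬ Approves P k v e := by
  intro he
  have hc := approves_of_prefers hP (prefers_of_between hP hSP hw hcw) he
  have := lt_add_of_approves hP hSP hkm hc he
  have := lt_add_of_approves hP hSP hkm he hc
  omega

end Bloc

theorem bloc_winning_set_gehrlein_stable_of_large_k_general {m N : ℕ}
    (P : Fin N → Fin m → Fin m → Prop) [∀ v a b, Decidable (P v a b)]
    (hP : StrictPrefs P) (hSP : SinglePeaked P)
    (k : ℕ) (hk : (m + 1) / 2 ≤ k)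
    (W : Finset (Fin m)) (hW : IsWinningSet P k W) :
    ∀ w ∈ W, ∀ c ∉ W, Defeats P w c := by
  have hmk : m ≤ 2 * k := by omega
  have hkm : k ≤ m := by simpa [hW.1] using card_le_univ W
  obtain ⟨t, htm, hmemW⟩ := exists_mem_iff_of_ordConnected W (hW.ordConnected hP hSP hmk)
  rw [hW.1] at htm hmemW
  intro w hw c hc
  have hwc : w ≠ c := by rintro rfl; exact hc hw
  rw [hmemW] at hw hc
  rcases Nat.lt_or_ge (c : ℕ) t with hct | hct
  · let d : Fin m := ⟨t - 1, by omega⟩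
    let x : Fin m := ⟨t + k - 1, by omega⟩
    refine defeats_of_approves_iff_not (x := x) (d := d) hP hwc
      (fun v => approves_iff_not_approves hP hSP hkm hmk (by simp [d, x]; omega))
      (hW.2 x (by simp [hmemW, x]; omega) d (by simp [hmemW, d]; omega))
      fun v => not_approves_of_prefers_of_far hP hSP hkm
        (by simp only [Fin.lt_def, Fin.le_def, x]; omega) (by simp [x]; omega)
  · let d : Fin m := ⟨t + k, by omega⟩
    let x : Fin m := ⟨t, by omega⟩
    refine defeats_of_approves_iff_not (x := x) (d := d) hP hwc
      (fun v => iff_not_comm.1 (approves_iff_not_approves hP hSP hkm hmk (by simp [d, x])))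
      (hW.2 x (by simp [hmemW, x]; omega) d (by simp [hmemW, d]))
      fun v => not_approves_of_prefers_of_far hP hSP hkm
        (by simp only [Fin.lt_def, Fin.le_def, x]; omega) (by simp [x]; omega)

/-- If `k ≥ ⌈m/2⌉`, any Bloc-voting winning set is Gehrlein-stable. -/
theorem bloc_winning_set_gehrlein_stable_of_large_k {m N : ℕ}
    (P : Fin N → Fin m → Fin m → Prop) [∀ v a b, Decidable (P v a b)]
    (hP : StrictPrefs P) (hSP : SinglePeaked P) (hN : Odd N)
    (k : ℕ) (hk : (m + 1) / 2 ≤ k)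
    (W : Finset (Fin m)) (hW : IsWinningSet P k W) :
    ∀ w ∈ W, ∀ c ∉ W, Defeats P w c :=
  bloc_winning_set_gehrlein_stable_of_large_k_general P hP hSP k hk W hW
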